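/- Every Schur ring over a finite cyclic group of prime order p is cyclotomic: if A is an S-ring over C_p then there exists K ≤ Aut(C_p) such that the basic sets of A are exactly the orbits of K on C_p. -/

import Mathlib

open scoped BigOperators

/-- The indicator element `X̲ = Σ_{x∈X} x` of a finset in the integral group ring `ℤG`. -/
noncomputable def grpInd {G : Type*} [Group G] (X : Finset G) : MonoidAlgebra ℤ G :=
  ∑ x ∈ X, MonoidAlgebra.single x (1 : ℤ)

/-- A Schur ring over a finite group `G`: a partition of `G` containing `{1}`,
closed under inverses, whose indicator elements span a subring of `ℤG`. -/
structure SchurRing (G : Type*) [Group G] [Fintype G] [DecidableEq G] where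
  parts : Finset (Finset G)
  nonempty_mem : ∀ X ∈ parts, X.Nonempty
  cover : ∀ g : G, ∃ X ∈ parts, g ∈ X
  pairwise_disjoint : ∀ X ∈ parts, ∀ Y ∈ parts, X ≠ Y → Disjoint X Y
  one_mem : ({1} : Finset G) ∈ parts
  inv_mem : ∀ X ∈ parts, X.image (·⁻¹) ∈ parts
  mul_mem : ∀ X ∈ parts, ∀ Y ∈ parts, ∃ c : Finset G → ℤ,
    grpInd X * grpInd Y = ∑ Z ∈ parts, c Z • grpInd Z

namespace SchurRing

variable {G : Type*} [Group G] [Fintype G] [DecidableEq G]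

/-- The underlying `ℤ`-module of the Schur ring: the span of the indicators of basic sets. -/
noncomputable def carrier (A : SchurRing G) : Submodule ℤ (MonoidAlgebra ℤ G) :=
  Submodule.span ℤ {v | ∃ X ∈ A.parts, v = grpInd X}

/-- `X ⊆ G` is an `A`-set if its indicator lies in `A`. -/
def IsASet (A : SchurRing G) (X : Finset G) : Prop := grpInd X ∈ A.carrier

/-- `A` is a subring of `B` (as S-rings over the same group). -/
def le (A B : SchurRing G) : Prop := ∀ X ∈ A.parts, grpInd X ∈ B.carrier

end SchurRing

/-- An algebraic isomorphism of Schur rings: a bijection of basic sets preserving all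
structure constants (the structure constant `c^Z_{X,Y}` is the coefficient of the
product `X̲·Y̲` at any `z ∈ Z`). -/
def IsAlgIso {G G' : Type*} [Group G] [Fintype G] [DecidableEq G]
    [Group G'] [Fintype G'] [DecidableEq G']
    (A : SchurRing G) (A' : SchurRing G') (φ : Finset G → Finset G') : Prop :=
  Set.BijOn φ ↑A.parts ↑A'.parts ∧
  ∀ X ∈ A.parts, ∀ Y ∈ A.parts, ∀ Z ∈ A.parts, ∀ z ∈ Z, ∀ z' ∈ φ Z,
    (grpInd X * grpInd Y).coeff z = (grpInd (φ X) * grpInd (φ Y)).coeff z'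

/-- A combinatorial isomorphism of Schur rings: a bijection `G → G'` mapping basic sets to
basic sets and inducing a Cayley graph isomorphism on each basic set. -/
def IsCombIso {G G' : Type*} [Group G] [Fintype G] [DecidableEq G]
    [Group G'] [Fintype G'] [DecidableEq G']
    (A : SchurRing G) (A' : SchurRing G') (f : G → G') : Prop :=
  Function.Bijective f ∧
  ∀ X ∈ A.parts, X.image f ∈ A'.parts ∧
    ∀ g h : G, h * g⁻¹ ∈ X ↔ f h * (f g)⁻¹ ∈ X.image f

/-- An automorphism of a Schur ring: a permutation of `G` preserving the edge set of
`Cay(G,X)` for every basic set `X`. -/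
def IsSchurAut {G : Type*} [Group G] [Fintype G] [DecidableEq G]
    (A : SchurRing G) (f : G → G) : Prop :=
  Function.Bijective f ∧ ∀ X ∈ A.parts, ∀ g h : G, h * g⁻¹ ∈ X ↔ f h * (f g)⁻¹ ∈ X

/-- Separability with respect to the class of (finite) abelian groups. -/
def SchurRing.IsSeparableAbelian {G : Type} [Group G] [Fintype G] [DecidableEq G]
    (A : SchurRing G) : Prop :=
  ∀ (G' : Type) [CommGroup G'] [Fintype G'] [DecidableEq G'],
    ∀ (A' : SchurRing G') (φ : Finset G → Finset G'),
    IsAlgIso A A' φ →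
    ∃ f : G → G', IsCombIso A A' f ∧ ∀ X ∈ A.parts, φ X = X.image f

/-!
For a prime `q ∤ |G|` the Frobenius congruence `X̲ ^ q ≡ Σ_{x ∈ X} x ^ q (mod q)` in `ℤG` shows
that the image `X^{(q)}` of an `A`-set under `x ↦ x ^ q` is again an `A`-set; composing, the same
holds for every `m` coprime to `|G|`, and the power maps permute the basic sets (Schur's theorem
on multipliers). In `C_p` every nontrivial basic set is the image `X^{(n)}` of a fixed one, and
power maps commute, so a power map that sends one element of a basic set `X` into `X` fixes every
basic set. As power maps act transitively on `C_p \ {1}`, the basic set containing `g` is the orbit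
of `g` under the group of automorphisms fixing every basic set.
-/

section GroupRing

variable {G : Type*} [Group G]

theorem grpInd_singleton_one : grpInd ({1} : Finset G) = 1 := by
  rw [grpInd, Finset.sum_singleton, MonoidAlgebra.one_def]

variable [DecidableEq G]

theorem coeff_grpInd (X : Finset G) (g : G) :
    (grpInd X).coeff g = if g ∈ X then 1 else 0 := by
  rw [grpInd, MonoidAlgebra.coeff_sum, Finset.sum_apply']
  simp [Finsupp.single_apply]

theorem grpInd_image {f : G → G} (hf : Function.Injective f) (X : Finset G) :
    grpInd (X.image f) = ∑ x ∈ X, MonoidAlgebra.single (f x) (1 : ℤ) := by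
  rw [grpInd, Finset.sum_image fun x _ y _ h => hf h]

theorem exists_grpInd_pow_prime_eq [IsMulCommutative G] {q : ℕ} (hq : q.Prime) (X : Finset G) :
    ∃ τ : MonoidAlgebra ℤ G,
      grpInd X ^ q = ∑ x ∈ X, MonoidAlgebra.single (x ^ q) (1 : ℤ) + (q : ℤ) • τ := by
  induction X using Finset.induction with
  | empty => exact ⟨0, by simp [grpInd, zero_pow hq.ne_zero]⟩
  | insert a s ha ih =>
    obtain ⟨τ, hτ⟩ := ih
    have hcomm : Commute (MonoidAlgebra.single a (1 : ℤ)) (grpInd s) :=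
      Commute.sum_right _ _ _ fun x _ => by
        rw [Commute, SemiconjBy, MonoidAlgebra.single_mul_single,
          MonoidAlgebra.single_mul_single, mul_comm' a x]
    obtain ⟨r, hr⟩ := hcomm.exists_add_pow_prime_eq hq
    refine ⟨τ + MonoidAlgebra.single a 1 * grpInd s * r, ?_⟩
    rw [grpInd, Finset.sum_insert ha, ← grpInd, hr, hτ, MonoidAlgebra.single_pow, one_pow,
      Finset.sum_insert ha]
    simp only [zsmul_eq_mul, Int.cast_natCast, mul_add, mul_assoc]
    abel

end GroupRing

section PowerMaps

variable {G : Type*} [Group G]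

theorem exists_pow_pow_eq_self [Finite G] {m : ℕ} (hm : (Nat.card G).Coprime m) :
    ∃ m' : ℕ, (Nat.card G).Coprime m' ∧ ∀ x : G, (x ^ m) ^ m' = x := by
  have htot : 0 < (Nat.card G).totient := Nat.totient_pos.mpr Nat.card_pos
  refine ⟨m ^ ((Nat.card G).totient - 1), hm.pow_right _, fun x => ?_⟩
  rw [← pow_mul, ← pow_succ', Nat.sub_add_cancel htot, ← pow_mod_natCard,
    Nat.ModEq.pow_totient hm.symm, pow_mod_natCard, pow_one]

theorem exists_coprime_pow_eq_of_prime_card (hG : (Nat.card G).Prime)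
    {g h : G} (hg : g ≠ 1) (hh : h ≠ 1) : ∃ m : ℕ, (Nat.card G).Coprime m ∧ g ^ m = h := by
  have : Fact (Nat.card G).Prime := ⟨hG⟩
  obtain ⟨m, hm : g ^ m = h⟩ := mem_powers_of_prime_card rfl hg (g' := h)
  refine ⟨m, (Nat.Prime.coprime_iff_not_dvd hG).mpr ?_, hm⟩
  rintro ⟨t, rfl⟩
  rw [pow_mul, pow_card_eq_one', one_pow] at hm
  exact hh hm.symm

noncomputable def powMulAut [IsMulCommutative G] {m : ℕ}
    (hm : (Nat.card G).Coprime m) : MulAut G :=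
  MulEquiv.ofBijective
    ({ toFun := (· ^ m)
       map_one' := one_pow m
       map_mul' := fun x y => Commute.mul_pow (mul_comm' x y) m } : G →* G)
    hm.pow_left_bijective

theorem coe_powMulAut [IsMulCommutative G] {m : ℕ} (hm : (Nat.card G).Coprime m) :
    ⇑(powMulAut hm) = (· ^ m) :=
  rfl

end PowerMaps

namespace SchurRing

variable {G : Type*} [Group G] [Fintype G] [DecidableEq G] (A : SchurRing G)

theorem eq_of_mem_of_mem {X Y : Finset G} (hX : X ∈ A.parts) (hY : Y ∈ A.parts) {g : G}
    (hgX : g ∈ X) (hgY : g ∈ Y) : X = Y := by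
  by_contra h
  exact Finset.disjoint_left.mp (A.pairwise_disjoint X hX Y hY h) hgX hgY

theorem eq_singleton_one {X : Finset G} (hX : X ∈ A.parts) (h1 : (1 : G) ∈ X) : X = {1} :=
  A.eq_of_mem_of_mem hX A.one_mem h1 (Finset.mem_singleton_self 1)

theorem grpInd_mem_carrier {X : Finset G} (hX : X ∈ A.parts) : grpInd X ∈ A.carrier :=
  Submodule.subset_span ⟨X, hX, rfl⟩

theorem one_mem_carrier : (1 : MonoidAlgebra ℤ G) ∈ A.carrier :=
  grpInd_singleton_one (G := G) ▸ A.grpInd_mem_carrier A.one_mem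

theorem mul_mem_carrier {v w : MonoidAlgebra ℤ G} (hv : v ∈ A.carrier) (hw : w ∈ A.carrier) :
    v * w ∈ A.carrier := by
  induction hv using Submodule.span_induction with
  | mem x hx =>
    obtain ⟨X, hX, rfl⟩ := hx
    induction hw using Submodule.span_induction with
    | mem y hy =>
      obtain ⟨Y, hY, rfl⟩ := hy
      obtain ⟨c, hc⟩ := A.mul_mem X hX Y hY
      rw [hc]
      exact Submodule.sum_mem _ fun Z hZ => Submodule.smul_mem _ _ (A.grpInd_mem_carrier hZ)
    | zero => simp
    | add a b _ _ ha hb => rw [mul_add]; exact A.carrier.add_mem ha hb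
    | smul a x _ hx => rw [mul_smul_comm]; exact A.carrier.smul_mem _ hx
  | zero => simp
  | add a b _ _ ha hb => rw [add_mul]; exact A.carrier.add_mem ha hb
  | smul a x _ hx => rw [smul_mul_assoc]; exact A.carrier.smul_mem _ hx

theorem pow_mem_carrier {v : MonoidAlgebra ℤ G} (hv : v ∈ A.carrier) (n : ℕ) :
    v ^ n ∈ A.carrier := by
  induction n with
  | zero => simpa using A.one_mem_carrier
  | succ n ih => rw [pow_succ]; exact A.mul_mem_carrier ih hv

theorem coeff_eq_of_mem_carrier {v : MonoidAlgebra ℤ G} (hv : v ∈ A.carrier) {X : Finset G}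
    (hX : X ∈ A.parts) {g h : G} (hg : g ∈ X) (hh : h ∈ X) : v.coeff g = v.coeff h := by
  induction hv using Submodule.span_induction with
  | mem w hw =>
    obtain ⟨Y, hY, rfl⟩ := hw
    rw [coeff_grpInd, coeff_grpInd]
    by_cases hXY : X = Y
    · subst hXY; simp [hg, hh]
    · have hd := A.pairwise_disjoint X hX Y hY hXY
      rw [if_neg (Finset.disjoint_left.mp hd hg), if_neg (Finset.disjoint_left.mp hd hh)]
  | zero => rfl
  | add x y _ _ hx hy => simp only [MonoidAlgebra.coeff_add, Finsupp.add_apply, hx, hy]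
  | smul a x _ hx => simp only [MonoidAlgebra.coeff_smul, Finsupp.smul_apply, hx]

theorem subset_of_isASet {S : Finset G} (hS : A.IsASet S) {X : Finset G} (hX : X ∈ A.parts)
    {g : G} (hgX : g ∈ X) (hgS : g ∈ S) : X ⊆ S := by
  intro x hx
  have h := A.coeff_eq_of_mem_carrier hS hX hx hgX
  rw [coeff_grpInd, coeff_grpInd, if_pos hgS] at h
  by_contra hxS
  rw [if_neg hxS] at h
  exact zero_ne_one h

theorem isASet_of_forall_subset_or_disjoint {S : Finset G}
    (h : ∀ X ∈ A.parts, X ⊆ S ∨ Disjoint X S) : A.IsASet S := by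
  have hS : S = (A.parts.filter (· ⊆ S)).biUnion id := by
    ext g
    simp only [Finset.mem_biUnion, Finset.mem_filter, id]
    refine ⟨fun hg => ?_, fun ⟨X, ⟨_, hXS⟩, hgX⟩ => hXS hgX⟩
    obtain ⟨X, hX, hgX⟩ := A.cover g
    exact ⟨X, ⟨hX, (h X hX).resolve_right fun hd => Finset.disjoint_left.mp hd hgX hg⟩, hgX⟩
  have hdisj : (A.parts.filter (· ⊆ S) : Set (Finset G)).PairwiseDisjoint id :=
    fun X hX Y hY =>
      A.pairwise_disjoint X (Finset.mem_filter.mp hX).1 Y (Finset.mem_filter.mp hY).1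
  rw [IsASet, hS, grpInd, Finset.sum_biUnion hdisj]
  exact Submodule.sum_mem _ fun X hX => A.grpInd_mem_carrier (Finset.mem_filter.mp hX).1

section Multiplier

variable [IsMulCommutative G]

theorem isASet_image_pow_prime {q : ℕ} (hq : q.Prime) (hqG : (Nat.card G).Coprime q)
    {S : Finset G} (hS : A.IsASet S) : A.IsASet (S.image (· ^ q)) := by
  obtain ⟨τ, hτ⟩ := exists_grpInd_pow_prime_eq hq S
  rw [← grpInd_image hqG.pow_left_bijective.injective] at hτ
  have hpow : grpInd S ^ q ∈ A.carrier := A.pow_mem_carrier hS q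
  refine A.isASet_of_forall_subset_or_disjoint fun X hX => ?_
  refine or_iff_not_imp_right.mpr fun hmeet => ?_
  obtain ⟨y₀, hy₀X, hy₀S⟩ := Finset.not_disjoint_iff.mp hmeet
  intro y hyX
  by_contra hyS
  have hcoeff := A.coeff_eq_of_mem_carrier hpow hX hyX hy₀X
  simp only [hτ, MonoidAlgebra.coeff_add, MonoidAlgebra.coeff_smul, Finsupp.add_apply,
    Finsupp.smul_apply, coeff_grpInd, hyS, hy₀S, if_true, if_false, smul_eq_mul] at hcoeff
  -- the two coefficients of `S̲ ^ q` differ by `1` modulo `q`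
  have hdvd : (q : ℤ) ∣ 1 := ⟨τ.coeff y - τ.coeff y₀, by linear_combination -hcoeff⟩
  exact hq.one_lt.ne' (Nat.dvd_one.mp (Int.natCast_dvd_natCast.mp hdvd))

theorem isASet_image_pow {m : ℕ} (hm : (Nat.card G).Coprime m) {S : Finset G}
    (hS : A.IsASet S) : A.IsASet (S.image (· ^ m)) := by
  induction m using induction_on_primes generalizing S with
  | zero =>
    have : Subsingleton G := (Nat.card_eq_one_iff_unique.mp (Nat.coprime_zero_right _ |>.mp hm)).1
    rwa [Subsingleton.elim (· ^ 0 : G → G) id, Finset.image_id]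
  | one => simpa using hS
  | prime_mul q a hq ih =>
    rw [Nat.coprime_mul_iff_right] at hm
    have := ih hm.2 (A.isASet_image_pow_prime hq hm.1 hS)
    simpa only [Finset.image_image, Function.comp_def, ← pow_mul] using this

/-- Schur's theorem on multipliers. -/
theorem image_pow_mem_parts {m : ℕ} (hm : (Nat.card G).Coprime m) {X : Finset G}
    (hX : X ∈ A.parts) : X.image (· ^ m) ∈ A.parts := by
  obtain ⟨m', hm', hinv⟩ := exists_pow_pow_eq_self hm
  obtain ⟨g, hg⟩ := A.nonempty_mem X hX
  obtain ⟨Y, hY, hgY⟩ := A.cover (g ^ m)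
  have hYX : Y ⊆ X.image (· ^ m) := A.subset_of_isASet
    (A.isASet_image_pow hm (A.grpInd_mem_carrier hX)) hY hgY (Finset.mem_image_of_mem _ hg)
  have hXY : X ⊆ Y.image (· ^ m') := A.subset_of_isASet
    (A.isASet_image_pow hm' (A.grpInd_mem_carrier hY)) hX hg
    (hinv g ▸ Finset.mem_image_of_mem _ hgY)
  have hXY' : X.image (· ^ m) ⊆ Y := by
    calc X.image (· ^ m) ⊆ (Y.image (· ^ m')).image (· ^ m) := Finset.image_subset_image hXY
      _ = Y := by
        simp only [Finset.image_image, Function.comp_def, pow_right_comm _ m' m, hinv,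
          Finset.image_id']
  exact (hYX.antisymm hXY') ▸ hY

theorem image_pow_eq_of_pow_mem {m n : ℕ} (hm : (Nat.card G).Coprime m)
    (hn : (Nat.card G).Coprime n) {X Y : Finset G} (hX : X ∈ A.parts) (hY : Y ∈ A.parts)
    {g : G} (hgX : g ∈ X) (hgmX : g ^ m ∈ X) (hgnY : g ^ n ∈ Y) : Y.image (· ^ m) = Y := by
  have hXm : X.image (· ^ m) = X :=
    A.eq_of_mem_of_mem (A.image_pow_mem_parts hm hX) hX (Finset.mem_image_of_mem _ hgX) hgmX
  have hYX : Y = X.image (· ^ n) :=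
    A.eq_of_mem_of_mem hY (A.image_pow_mem_parts hn hX) hgnY (Finset.mem_image_of_mem _ hgX)
  calc Y.image (· ^ m) = (X.image (· ^ m)).image (· ^ n) := by
        simp only [hYX, Finset.image_image, Function.comp_def, ← pow_mul, mul_comm m n]
    _ = Y := by rw [hXm, hYX]

end Multiplier

open Pointwise in
def partStabilizer : Subgroup (MulAut G) :=
  ⨅ X ∈ A.parts, MulAction.stabilizer (MulAut G) X

theorem mem_partStabilizer {κ : MulAut G} :
    κ ∈ A.partStabilizer ↔ ∀ X ∈ A.parts, X.image κ = X := by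
  simp [partStabilizer, Subgroup.mem_iInf, MulAction.mem_stabilizer_iff, Finset.smul_finset_def]

theorem setOf_partStabilizer_apply_eq (hG : (Nat.card G).Prime) {X : Finset G}
    (hX : X ∈ A.parts) {g : G} (hg : g ∈ X) :
    {h : G | ∃ κ ∈ A.partStabilizer, κ g = h} = X := by
  have : Fact (Nat.card G).Prime := ⟨hG⟩
  have : IsCyclic G := isCyclic_of_prime_card rfl
  ext h
  refine ⟨?_, fun hh => ?_⟩
  · rintro ⟨κ, hκ, rfl⟩
    exact (A.mem_partStabilizer.mp hκ X hX) ▸ Finset.mem_image_of_mem κ hg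
  by_cases hg1 : g = 1
  · subst hg1
    rw [A.eq_singleton_one hX hg] at hh
    exact ⟨1, A.partStabilizer.one_mem, (Finset.mem_singleton.mp hh).symm⟩
  have hh1 : h ≠ 1 := fun h1 =>
    hg1 (Finset.mem_singleton.mp (A.eq_singleton_one hX (h1 ▸ hh) ▸ hg))
  obtain ⟨m, hm, rfl⟩ := exists_coprime_pow_eq_of_prime_card hG hg1 hh1
  refine ⟨powMulAut hm, A.mem_partStabilizer.mpr fun Y hY => ?_, congrFun (coe_powMulAut hm) g⟩
  obtain ⟨y, hy⟩ := A.nonempty_mem Y hY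
  by_cases hy1 : y = 1
  · simp [A.eq_singleton_one hY (hy1 ▸ hy)]
  obtain ⟨n, hn, rfl⟩ := exists_coprime_pow_eq_of_prime_card hG hg1 hy1
  rw [coe_powMulAut]
  exact A.image_pow_eq_of_pow_mem hm hn hX hY hg hh hy

end SchurRing

/-- every Schur ring over a group of prime order is cyclotomic: its basic
sets are exactly the orbits of some `K ≤ Aut(G)`. -/
theorem stmt17 {G : Type*} [Group G] [Fintype G] [DecidableEq G]
    (p : ℕ) (hp : p.Prime) (hG : Fintype.card G = p) (A : SchurRing G) :
    ∃ K : Subgroup (MulAut G), ∀ X : Finset G,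
      X ∈ A.parts ↔ ∃ g : G, X = (Set.toFinite {h : G | ∃ κ ∈ K, κ g = h}).toFinset := by
  have hG' : (Nat.card G).Prime := by rwa [Nat.card_eq_fintype_card, hG]
  have horbit {X : Finset G} (hX : X ∈ A.parts) {g : G} (hg : g ∈ X) :
      (Set.toFinite {h : G | ∃ κ ∈ A.partStabilizer, κ g = h}).toFinset = X :=
    Finset.coe_injective <| by
      rw [Set.Finite.coe_toFinset, A.setOf_partStabilizer_apply_eq hG' hX hg]
  refine ⟨A.partStabilizer, fun X => ⟨fun hX => ?_, ?_⟩⟩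
  · obtain ⟨g, hg⟩ := A.nonempty_mem X hX
    exact ⟨g, (horbit hX hg).symm⟩
  · rintro ⟨g, rfl⟩
    obtain ⟨X, hX, hg⟩ := A.cover g
    rwa [horbit hX hg]
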